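/- arXiv:1104.1717 — 5 statements merged into one kernel-verified Lean document; each statement's English description precedes it below -/
import Mathlib

section
/- Let a > −1 and s := (1+a)/2. Then the shift-derivative u′ = (1 − H(x − st)) + ((1+a)t/2) δ_Dirac(x − st) of the shock solution of Burgers' equation is a weak solution of the linearized equation ∂ₜu′ + ∂ₓ(ū u′) = 0 with initial data 1 − H(x), where the flux coefficient ū takes the mean value (u⁺+u⁻)/2 = (1+a)/2 = s on the shock. Explicitly, for every test function φ ∈ C_c^∞(ℝ × [0,∞); ℝ): ∫₀^∞ ∫_{−∞}^{s t} ( ∂ₜφ(x,t) + (1+a) ∂ₓφ(x,t) ) dx dt + ∫₀^∞ ((1+a)t/2) ( ∂ₜφ(s t, t) + s ∂ₓφ(s t, t) ) dt + ∫_{−∞}^{0} φ(x,0) dx = 0. -/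
open MeasureTheory Set

/-- The shift-derivative `u′ = (1 − H(x − st)) + ((1+a)t/2) δ(x − st)` of the Burgers
shock solution is a weak solution of the linearized equation `∂ₜu′ + ∂ₓ(ū u′) = 0`
with initial data `1 − H(x)`, the coefficient `ū` taking the mean value `s = (1+a)/2`
on the shock: tested against `φ ∈ C_c^∞(ℝ × [0,∞))` one gets the displayed identity. -/
theorem linearized_burgers_shift_derivative_weak_solution (a : ℝ) (ha : a > -1)
    (s : ℝ) (hs : s = (1 + a) / 2) :
    ∀ φ : ℝ → ℝ → ℝ,
      ContDiff ℝ (⊤ : ℕ∞) (fun p : ℝ × ℝ => φ p.1 p.2) →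
      HasCompactSupport (fun p : ℝ × ℝ => φ p.1 p.2) →
      (∫ t in Ioi (0 : ℝ), ∫ x in Iio (s * t),
          (deriv (fun τ => φ x τ) t + (1 + a) * deriv (fun y => φ y t) x))
        + (∫ t in Ioi (0 : ℝ), ((1 + a) * t / 2)
            * (deriv (fun τ => φ (s * t) τ) t + s * deriv (fun y => φ y t) (s * t)))
        + (∫ x in Iio (0 : ℝ), φ x 0) = 0 := by
  intro φ hφ hsupp
  have ha2 : (1 : ℝ) + a = 2 * s := by rw [hs]; ring
  set Φ : ℝ × ℝ → ℝ := fun p => φ p.1 p.2 with hΦdef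
  have hΦdiff : Differentiable ℝ Φ := hφ.differentiable (by simp)
  have hfd : ∀ p : ℝ × ℝ, HasFDerivAt Φ (fderiv ℝ Φ p) p := fun p => (hΦdiff p).hasFDerivAt
  have hcf : Continuous (fderiv ℝ Φ) := hφ.continuous_fderiv (by simp)
  -- a bound on the support
  obtain ⟨R, hR0, hRsub⟩ : ∃ R : ℝ, 0 < R ∧ tsupport Φ ⊆ Metric.closedBall 0 R :=
    hsupp.isCompact.isBounded.subset_closedBall_lt 0 0
  have hvanish : ∀ x t : ℝ, R < |x| ∨ R < |t| → φ x t = 0 ∧ fderiv ℝ Φ (x, t) = 0 := by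
    intro x t h
    have hnot : (x, t) ∉ tsupport Φ := by
      intro hmem
      have := hRsub hmem
      rw [Metric.mem_closedBall, dist_zero_right, Prod.norm_def] at this
      simp only [Real.norm_eq_abs, max_le_iff] at this
      rcases h with h | h <;> linarith [this.1, this.2]
    refine ⟨?_, ?_⟩
    · show Φ (x, t) = 0
      exact image_eq_zero_of_notMem_tsupport hnot
    have : (x, t) ∉ Function.support (fderiv ℝ Φ) := fun hm => hnot (support_fderiv_subset ℝ hm)
    exact Function.notMem_support.mp this
  -- partial derivatives
  have hD1 : ∀ x t : ℝ, HasDerivAt (fun y => φ y t) (fderiv ℝ Φ (x, t) (1, 0)) x := by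
    intro x t
    have hc : HasDerivAt (fun y : ℝ => (y, t)) ((1 : ℝ), (0 : ℝ)) x :=
      (hasDerivAt_id x).prodMk (hasDerivAt_const x t)
    exact (hfd (x, t)).comp_hasDerivAt x hc
  have hD2 : ∀ x t : ℝ, HasDerivAt (fun τ => φ x τ) (fderiv ℝ Φ (x, t) (0, 1)) t := by
    intro x t
    have hc : HasDerivAt (fun τ : ℝ => (x, τ)) ((0 : ℝ), (1 : ℝ)) t :=
      (hasDerivAt_const t x).prodMk (hasDerivAt_id t)
    exact (hfd (x, t)).comp_hasDerivAt t hc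
  have hDψ : ∀ y t : ℝ, HasDerivAt (fun τ => φ (y + s * τ) τ)
      (fderiv ℝ Φ (y + s * t, t) (s, 1)) t := by
    intro y t
    have hc : HasDerivAt (fun τ : ℝ => (y + s * τ, τ)) ((s : ℝ), (1 : ℝ)) t := by
      simpa using (((hasDerivAt_id t).const_mul s).const_add y).prodMk (hasDerivAt_id t)
    exact (hfd (y + s * t, t)).comp_hasDerivAt_of_eq t hc rfl
  have hDg : ∀ t : ℝ, HasDerivAt (fun τ => φ (s * τ) τ) (fderiv ℝ Φ (s * t, t) (s, 1)) t := by
    intro t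
    have hc : HasDerivAt (fun τ : ℝ => (s * τ, τ)) ((s : ℝ), (1 : ℝ)) t := by
      simpa using ((hasDerivAt_id t).const_mul s).prodMk (hasDerivAt_id t)
    exact (hfd (s * t, t)).comp_hasDerivAt_of_eq t hc rfl
  -- linearity of the differential
  have hlin : ∀ p : ℝ × ℝ, fderiv ℝ Φ p (0, 1) + s * fderiv ℝ Φ p (1, 0)
      = fderiv ℝ Φ p (s, 1) := by
    intro p
    have h : ((s : ℝ), (1 : ℝ)) = ((0 : ℝ), (1 : ℝ)) + s • ((1 : ℝ), (0 : ℝ)) := by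
      simp [Prod.ext_iff]
    rw [h, map_add, _root_.map_smul, smul_eq_mul]
  -- continuity and support of partial derivative slices
  have habs : ∀ x : ℝ, x ∉ Icc (-R) R → R < |x| := by
    intro x hx
    rw [Set.mem_Icc, not_and_or] at hx
    rcases hx with h | h
    · exact lt_abs.mpr (Or.inr (by linarith [not_le.mp h]))
    · exact lt_abs.mpr (Or.inl (not_le.mp h))
  have hcont1 : ∀ (t : ℝ) (v : ℝ × ℝ), Continuous fun x => fderiv ℝ Φ (x, t) v := by
    intro t v
    exact (hcf.comp (continuous_id.prodMk continuous_const)).clm_apply continuous_const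
  have hsupp1 : ∀ (t : ℝ) (v : ℝ × ℝ), HasCompactSupport fun x => fderiv ℝ Φ (x, t) v := by
    intro t v
    refine HasCompactSupport.intro (isCompact_Icc (a := -R) (b := R)) fun x hx => ?_
    rw [(hvanish x t (Or.inl (habs x hx))).2]; rfl
  -- FTC in x
  have hFTCx : ∀ t c : ℝ, ∫ x in Iio c, fderiv ℝ Φ (x, t) (1, 0) = φ c t := by
    intro t c
    have hf1 : ContDiff ℝ 1 fun x => φ x t :=
      (hφ.comp (contDiff_id.prodMk contDiff_const)).of_le (by simp)
    have hsp : HasCompactSupport fun x => φ x t :=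
      HasCompactSupport.intro (isCompact_Icc (a := -R) (b := R)) fun x hx =>
        (hvanish x t (Or.inl (habs x hx))).1
    have heq : (fun x => fderiv ℝ Φ (x, t) (1, 0)) = deriv fun y => φ y t :=
      funext fun x => ((hD1 x t).deriv).symm
    rw [heq, setIntegral_congr_set Iio_ae_eq_Iic,
      HasCompactSupport.integral_Iic_deriv_eq hf1 hsp c]
  -- the shifted time-derivative integrand
  set W : ℝ × ℝ → ℝ := fun p => fderiv ℝ Φ (p.2 + s * p.1, p.1) (s, 1) with hWdef
  have hWcont : Continuous W := by
    exact (hcf.comp ((continuous_snd.add (continuous_const.mul continuous_fst)).prodMk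
      continuous_fst)).clm_apply continuous_const
  have hWsupp : HasCompactSupport W := by
    refine HasCompactSupport.intro (isCompact_closedBall (0 : ℝ × ℝ) (R + |s| * R + R))
      fun p hp => ?_
    have hp' : R + |s| * R + R < |p.1| ∨ R + |s| * R + R < |p.2| := by
      rw [Metric.mem_closedBall, dist_zero_right, Prod.norm_def, not_le] at hp
      simpa [Real.norm_eq_abs, lt_max_iff] using hp
    have hsR : 0 ≤ |s| * R := mul_nonneg (abs_nonneg s) hR0.le
    show (fderiv ℝ Φ (p.2 + s * p.1, p.1)) (s, 1) = 0
    rcases hp' with h | h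
    · rw [(hvanish _ _ (Or.inr (by linarith [abs_nonneg p.2]))).2]; rfl
    · by_cases ht : R < |p.1|
      · rw [(hvanish _ _ (Or.inr ht)).2]; rfl
      · have h1 : |s * p.1| ≤ |s| * R := by
          rw [abs_mul]; exact mul_le_mul_of_nonneg_left (not_lt.mp ht) (abs_nonneg s)
        have h2 : R < |p.2 + s * p.1| := by
          have := abs_sub_abs_le_abs_sub (p.2) (-(s * p.1))
          simp only [sub_neg_eq_add, abs_neg] at this
          linarith
        rw [(hvanish _ _ (Or.inl h2)).2]; rfl
  -- FTC in t
  have hFTCt : ∀ y : ℝ, ∫ t in Ioi (0 : ℝ), W (t, y) = -φ y 0 := by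
    intro y
    have hf1 : ContDiff ℝ 1 fun τ => φ (y + s * τ) τ :=
      (hφ.comp ((contDiff_const.add (contDiff_const.mul contDiff_id)).prodMk contDiff_id)).of_le
        (by simp)
    have hsp : HasCompactSupport fun τ => φ (y + s * τ) τ :=
      HasCompactSupport.intro (isCompact_Icc (a := -R) (b := R)) fun τ hτ =>
        (hvanish _ τ (Or.inr (habs τ hτ))).1
    have heq : (fun t => W (t, y)) = deriv fun τ => φ (y + s * τ) τ :=
      funext fun t => ((hDψ y t).deriv).symm
    rw [heq, HasCompactSupport.integral_Ioi_deriv_eq hf1 hsp 0]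
    norm_num
  -- shift of the half-line integral
  have hshift : ∀ (q : ℝ → ℝ) (c : ℝ),
      ∫ x in Iio c, q x = ∫ y in Iio (0 : ℝ), q (y + c) := by
    intro q c
    rw [← integral_indicator measurableSet_Iio, ← integral_indicator measurableSet_Iio,
      ← (measurePreserving_add_right volume c).integral_comp
        (measurableEmbedding_addRight c)
        (fun x => Set.indicator (Iio c) q x)]
    congr 1
    funext y
    by_cases h : y < 0
    · rw [Set.indicator_of_mem (by simpa using h) (fun y => q (y + c)),
        Set.indicator_of_mem (by simp [h]) q]
    · rw [Set.indicator_of_notMem (by simpa using h) (fun y => q (y + c)),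
        Set.indicator_of_notMem (by simp [h]) q]
  -- integrability facts
  have hWprod : Integrable W ((volume.restrict (Ioi (0 : ℝ))).prod (volume.restrict
      (Iio (0 : ℝ)))) := by
    have h1 : Integrable W (volume : Measure (ℝ × ℝ)) :=
      hWcont.integrable_of_hasCompactSupport hWsupp
    rw [Measure.volume_eq_prod] at h1
    rw [Measure.prod_restrict]
    exact h1.restrict
  have hgint : Integrable (fun t => φ (s * t) t) (volume.restrict (Ioi (0 : ℝ))) := by
    have hgc : Continuous fun t => φ (s * t) t :=
      (hφ.continuous).comp ((continuous_const.mul continuous_id).prodMk continuous_id)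
    have hgs : HasCompactSupport fun t => φ (s * t) t :=
      HasCompactSupport.intro (isCompact_Icc (a := -R) (b := R)) fun t h =>
        (hvanish _ t (Or.inr (habs t h))).1
    exact (hgc.integrable_of_hasCompactSupport hgs).restrict
  -- evaluation of the inner integral of I₁
  have hinner : ∀ t : ℝ, (∫ x in Iio (s * t),
      (deriv (fun τ => φ x τ) t + (1 + a) * deriv (fun y => φ y t) x))
      = (∫ y in Iio (0 : ℝ), W (t, y)) + s * φ (s * t) t := by
    intro t
    have heq : (fun x => deriv (fun τ => φ x τ) t + (1 + a) * deriv (fun y => φ y t) x)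
        = fun x => fderiv ℝ Φ (x, t) (s, 1) + s * fderiv ℝ Φ (x, t) (1, 0) := by
      funext x
      rw [(hD2 x t).deriv, (hD1 x t).deriv, ha2, ← hlin (x, t)]
      ring
    have hiA : IntegrableOn (fun x => fderiv ℝ Φ (x, t) (s, 1)) (Iio (s * t)) :=
      ((hcont1 t (s, 1)).integrable_of_hasCompactSupport (hsupp1 t (s, 1))).integrableOn
    have hiB : IntegrableOn (fun x => s * fderiv ℝ Φ (x, t) (1, 0)) (Iio (s * t)) :=
      (((hcont1 t (1, 0)).integrable_of_hasCompactSupport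
        (hsupp1 t (1, 0))).const_mul s).integrableOn
    rw [heq, integral_add hiA hiB, integral_const_mul, hFTCx t (s * t),
      hshift (fun x => fderiv ℝ Φ (x, t) (s, 1)) (s * t)]
  -- I₁
  have hI1 : (∫ t in Ioi (0 : ℝ), ∫ x in Iio (s * t),
      (deriv (fun τ => φ x τ) t + (1 + a) * deriv (fun y => φ y t) x))
      = -(∫ x in Iio (0 : ℝ), φ x 0) + s * ∫ t in Ioi (0 : ℝ), φ (s * t) t := by
    rw [show (fun t => ∫ x in Iio (s * t),
        (deriv (fun τ => φ x τ) t + (1 + a) * deriv (fun y => φ y t) x))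
        = fun t => (∫ y in Iio (0 : ℝ), W (t, y)) + s * φ (s * t) t from funext hinner]
    rw [integral_add hWprod.integral_prod_left (hgint.const_mul s), integral_const_mul]
    congr 1
    have hswap : (∫ t in Ioi (0 : ℝ), ∫ y in Iio (0 : ℝ), W (t, y))
        = ∫ y in Iio (0 : ℝ), ∫ t in Ioi (0 : ℝ), W (t, y) :=
      integral_integral_swap (f := fun t y => W (t, y)) hWprod
    rw [hswap,
      show (fun y => ∫ t in Ioi (0 : ℝ), W (t, y)) = fun y => -φ y 0 from funext hFTCt,
      integral_neg]
  -- I₂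
  have hI2 : (∫ t in Ioi (0 : ℝ), ((1 + a) * t / 2)
      * (deriv (fun τ => φ (s * t) τ) t + s * deriv (fun y => φ y t) (s * t)))
      = -(s * ∫ t in Ioi (0 : ℝ), φ (s * t) t) := by
    have hgc : ContDiff ℝ (⊤ : ℕ∞) fun t => φ (s * t) t :=
      hφ.comp ((contDiff_const.mul contDiff_id).prodMk contDiff_id)
    have hgs : HasCompactSupport fun t => φ (s * t) t :=
      HasCompactSupport.intro (isCompact_Icc (a := -R) (b := R)) fun t h =>
        (hvanish _ t (Or.inr (habs t h))).1
    have hhc : ContDiff ℝ (⊤ : ℕ∞) fun t => t * φ (s * t) t := contDiff_id.mul hgc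
    have hhs : HasCompactSupport fun t => t * φ (s * t) t :=
      HasCompactSupport.intro (isCompact_Icc (a := -R) (b := R)) fun t h => by
        rw [(hvanish (s * t) t (Or.inr (habs t h))).1, mul_zero]
    have hDh : ∀ t : ℝ, HasDerivAt (fun t => t * φ (s * t) t)
        (1 * φ (s * t) t + t * fderiv ℝ Φ (s * t, t) (s, 1)) t :=
      fun t => (hasDerivAt_id t).mul (hDg t)
    have hfun : (fun t => ((1 + a) * t / 2)
        * (deriv (fun τ => φ (s * t) τ) t + s * deriv (fun y => φ y t) (s * t)))
        = fun t => s * deriv (fun t => t * φ (s * t) t) t - s * φ (s * t) t := by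
      funext t
      rw [(hD2 (s * t) t).deriv, (hD1 (s * t) t).deriv, hlin (s * t, t), (hDh t).deriv, ha2]
      ring
    have hi1 : IntegrableOn (fun t => s * deriv (fun t => t * φ (s * t) t) t)
        (Ioi (0 : ℝ)) :=
      (((hhc.continuous_deriv (by simp)).integrable_of_hasCompactSupport
        hhs.deriv).const_mul s).integrableOn
    have hi2 : IntegrableOn (fun t => s * φ (s * t) t) (Ioi (0 : ℝ)) := hgint.const_mul s
    rw [hfun, integral_sub hi1 hi2, integral_const_mul, integral_const_mul,
      HasCompactSupport.integral_Ioi_deriv_eq (hhc.of_le (by simp)) hhs 0]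
    norm_num
  rw [hI1, hI2]
  ring
end

section
/- Let δt, δx > 0, let u : ℤ → ℝ and s : ℤ → ℝ be arbitrary and let δu, w* : ℤ → ℝ be finitely supported. Define δv : ℤ → ℝ (the linearized conservative Burgers scheme applied to δu) by δv_i := δu_i − (δt/δx)[ s_i (u_i δu_i − u_{i−1} δu_{i−1}) + (1 − s_{i+1})(u_{i+1} δu_{i+1} − u_i δu_i) ], and define w : ℤ → ℝ (the discrete adjoint step applied to w*) by w_i := w*_i − (δt/δx) u_i ( w*_i s_i − w*_{i+1} s_{i+1} + w*_{i−1} (1 − s_i) − w*_i (1 − s_{i+1}) ). Then the discrete duality identity holds: Σ_{i∈ℤ} w*_i δv_i = Σ_{i∈ℤ} w_i δu_i. -/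
/-!
Write `F i = u i * δu i`. After expanding, both sides contain `∑ w*_i δu_i` and the diagonal
terms `w*_i s_i F_i`, `w*_i (1 - s_{i+1}) F_i`; the off-diagonal terms `w*_i s_i F_{i-1}` and
`w*_i (1 - s_{i+1}) F_{i+1}` become the corresponding terms of the adjoint after reindexing
`i ↦ i ± 1`, a bijection of `ℤ`. Finite support of `w*` keeps every sum finite, so the sums
may be split term by term.
-/

theorem finsum_mul_comp_add_right {G R : Type*} [AddGroup G] [NonUnitalNonAssocSemiring R]
    (f g : G → R) (k : G) :
    ∑ᶠ i, f i * g (i + k) = ∑ᶠ i, f (i - k) * g i := by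
  conv_rhs => rw [← finsum_comp_equiv (Equiv.addRight k)]
  simp

section UpwindDifference

variable {R : Type*} [CommRing R]

def upwindDiff (s F : ℤ → R) (i : ℤ) : R :=
  s i * (F i - F (i - 1)) + (1 - s (i + 1)) * (F (i + 1) - F i)

def upwindDiffAdjoint (s w : ℤ → R) (i : ℤ) : R :=
  w i * s i - w (i + 1) * s (i + 1) + w (i - 1) * (1 - s i) - w i * (1 - s (i + 1))

theorem hasFiniteSupport_upwindDiffAdjoint (s : ℤ → R) {w : ℤ → R}
    (hw : w.HasFiniteSupport) : (upwindDiffAdjoint s w).HasFiniteSupport := by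
  unfold upwindDiffAdjoint
  fun_prop (disch := intro _ _; simp)

theorem finsum_mul_upwindDiff (s F : ℤ → R) {w : ℤ → R} (hw : w.HasFiniteSupport) :
    ∑ᶠ i, w i * upwindDiff s F i = ∑ᶠ i, upwindDiffAdjoint s w i * F i := by
  set a : ℤ → R := fun i => w i * s i
  set b : ℤ → R := fun i => w i * (1 - s (i + 1))
  have hlhs : ∀ i, w i * upwindDiff s F i =
      (a i - b i) * F i - F (i - 1) * a i + b i * F (i + 1) := by
    intro i
    simp only [upwindDiff, a, b]
    ring
  have hrhs : ∀ i, upwindDiffAdjoint s w i * F i =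
      (a i - b i) * F i - F i * a (i + 1) + b (i - 1) * F i := by
    intro i
    simp only [upwindDiffAdjoint, a, b, sub_add_cancel]
    ring
  simp only [hlhs, hrhs]
  rw [finsum_add_distrib, finsum_sub_distrib, finsum_add_distrib, finsum_sub_distrib,
    finsum_mul_comp_add_right, finsum_mul_comp_add_right F a 1]
  all_goals fun_prop (disch := intro _ _; simp)

end UpwindDifference

theorem discrete_adjoint_duality_general (δt δx : ℝ)
    (u s : ℤ → ℝ) (δu wstar : ℤ → ℝ)
    (hw : (Function.support wstar).Finite) :
    (∑ᶠ i : ℤ, wstar i *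
        (δu i - (δt / δx) * (s i * (u i * δu i - u (i - 1) * δu (i - 1))
          + (1 - s (i + 1)) * (u (i + 1) * δu (i + 1) - u i * δu i))))
      = ∑ᶠ i : ℤ, (wstar i - (δt / δx) * u i *
          (wstar i * s i - wstar (i + 1) * s (i + 1)
            + wstar (i - 1) * (1 - s i) - wstar i * (1 - s (i + 1)))) * δu i := by
  have hw : wstar.HasFiniteSupport := hw
  have hadj := hasFiniteSupport_upwindDiffAdjoint s hw
  set F : ℤ → ℝ := fun i => u i * δu i
  calc ∑ᶠ i, wstar i * (δu i - (δt / δx) * upwindDiff s F i)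
      = ∑ᶠ i, wstar i * δu i - (δt / δx) * ∑ᶠ i, wstar i * upwindDiff s F i := by
        rw [mul_finsum, ← finsum_sub_distrib (by fun_prop) (by fun_prop)]
        congr! 2 with i
        ring
    _ = ∑ᶠ i, wstar i * δu i - (δt / δx) * ∑ᶠ i, upwindDiffAdjoint s wstar i * F i := by
        rw [finsum_mul_upwindDiff s F hw]
    _ = ∑ᶠ i, (wstar i - (δt / δx) * u i * upwindDiffAdjoint s wstar i) * δu i := by
        rw [mul_finsum, ← finsum_sub_distrib (by fun_prop) (by fun_prop)]
        congr! 2 with i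
        ring

/-- One-step adjoint duality for the conservative upwind scheme for Burgers' equation:
if `δv` is the linearized forward step applied to `δu` and `w` is the discrete adjoint
step applied to `w*`, then `⟨w*, δv⟩ = ⟨w, δu⟩`. -/
theorem discrete_adjoint_duality (δt δx : ℝ) (hδt : δt > 0) (hδx : δx > 0)
    (u s : ℤ → ℝ) (δu wstar : ℤ → ℝ)
    (hδu : (Function.support δu).Finite) (hw : (Function.support wstar).Finite) :
    (∑ᶠ i : ℤ, wstar i *
        (δu i - (δt / δx) * (s i * (u i * δu i - u (i - 1) * δu (i - 1))
          + (1 - s (i + 1)) * (u (i + 1) * δu (i + 1) - u i * δu i))))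
      = ∑ᶠ i : ℤ, (wstar i - (δt / δx) * u i *
          (wstar i * s i - wstar (i + 1) * s (i + 1)
            + wstar (i - 1) * (1 - s i) - wstar i * (1 - s (i + 1)))) * δu i :=
  discrete_adjoint_duality_general δt δx u s δu wstar hw
end

section
/- Let γ, u, v, E, ρ, ρ_∞, p be real numbers with γ ≠ 1, u ≠ 0, ρ ≠ 0, ρ_∞ ≠ 0, and set q² := u² + v². Assume D := ((γ−2)/2) q² + (γ/(γ−1)) u² + v² − γE ≠ 0. Let M be the 4×4 real matrix with rows: row 1 = (0, 1, 0, 0); row 2 = ((γ−1)q²/2 − u², (3−γ)u, (1−γ)v, γ−1); row 3 = (−vu, v, u, 0); row 4 = (((γ−1)q² − γE)u, (p/ρ + E) − (γ−1)u², (1−γ)vu, γu). Define W*₄ := (1/ρ_∞)(ρ/ρ_∞ − 1) / (D·u), W*₃ := −v·W*₄, W*₂ := −(γ/(γ−1))·u·W*₄, and W*₁ := ((γ+1)/(γ−1)·u² + v² − p/ρ − E)·W*₄. Then the row vector W* = (W*₁, W*₂, W*₃, W*₄) satisfies W*ᵀ M = ((1/ρ_∞)(ρ/ρ_∞ − 1),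 0, 0, 0). -/
/-!
The vector `(c, -γ/(γ-1)·u, -v, 1)`, with `c = (γ+1)/(γ-1)·u² + v² - p/ρ - E`, is a left null
vector of the last three columns of `n·F′(W)`, and its pairing with the first column is `D·u`.
So `W*` is this vector scaled by the right-hand side divided by `D·u`.
-/

open Matrix

namespace EulerAdjoint

variable {K : Type*} [Field K] [CharZero K]

/-- The Jacobian `n·F′(W)` of the 2D Euler flux for the normal `n = (1, 0)`. -/
def fluxJacobianX (γ u v E ρ p : K) : Matrix (Fin 4) (Fin 4) K :=
  !![0, 1, 0, 0;
     ((γ - 1) / 2) * (u ^ 2 + v ^ 2) - u ^ 2, (3 - γ) * u, (1 - γ) * v, γ - 1;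
     -(v * u), v, u, 0;
     ((γ - 1) * (u ^ 2 + v ^ 2) - γ * E) * u, (p / ρ + E) - (γ - 1) * u ^ 2, (1 - γ) * v * u,
       γ * u]

def adjointDirection (γ u v E ρ p : K) : Fin 4 → K :=
  ![(γ + 1) / (γ - 1) * u ^ 2 + v ^ 2 - p / ρ - E, -(γ / (γ - 1)) * u, -v, 1]

theorem adjointDirection_vecMul_fluxJacobianX {γ : K} (hγ : γ ≠ 1) (u v E ρ p : K) :
    adjointDirection γ u v E ρ p ᵥ* fluxJacobianX γ u v E ρ p =
      ![(((γ - 2) / 2) * (u ^ 2 + v ^ 2) + (γ / (γ - 1)) * u ^ 2 + v ^ 2 - γ * E) * u,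
        0, 0, 0] := by
  have hγ' : γ - 1 ≠ 0 := sub_ne_zero.mpr hγ
  ext j
  fin_cases j <;>
    simp [adjointDirection, fluxJacobianX, vecMul, dotProduct, Fin.sum_univ_four] <;>
    field_simp <;> ring

end EulerAdjoint

open EulerAdjoint in
theorem adjoint_outflow_boundary_condition_general (γ u v E ρ ρinf p : ℝ)
    (hγ : γ ≠ 1) (hu : u ≠ 0)
    (hD : ((γ - 2) / 2) * (u ^ 2 + v ^ 2) + (γ / (γ - 1)) * u ^ 2 + v ^ 2 - γ * E ≠ 0) :
    let q2 : ℝ := u ^ 2 + v ^ 2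
    let D : ℝ := ((γ - 2) / 2) * q2 + (γ / (γ - 1)) * u ^ 2 + v ^ 2 - γ * E
    let M : Matrix (Fin 4) (Fin 4) ℝ :=
      !![0, 1, 0, 0;
         ((γ - 1) / 2) * q2 - u ^ 2, (3 - γ) * u, (1 - γ) * v, γ - 1;
         -(v * u), v, u, 0;
         ((γ - 1) * q2 - γ * E) * u, (p / ρ + E) - (γ - 1) * u ^ 2, (1 - γ) * v * u, γ * u]
    let W4 : ℝ := (1 / ρinf) * (ρ / ρinf - 1) / (D * u)
    let W3 : ℝ := -v * W4
    let W2 : ℝ := -(γ / (γ - 1)) * u * W4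
    let W1 : ℝ := ((γ + 1) / (γ - 1) * u ^ 2 + v ^ 2 - p / ρ - E) * W4
    Matrix.vecMul ![W1, W2, W3, W4] M = ![(1 / ρinf) * (ρ / ρinf - 1), 0, 0, 0] := by
  intro q2 D M W4 W3 W2 W1
  have hW : ![W1, W2, W3, W4] = W4 • adjointDirection γ u v E ρ p := by
    ext j
    fin_cases j <;> simp [W1, W2, W3, adjointDirection, mul_comm]
  have hW4 : W4 * (D * u) = (1 / ρinf) * (ρ / ρinf - 1) := div_mul_cancel₀ _ (mul_ne_zero hD hu)
  change ![W1, W2, W3, W4] ᵥ* fluxJacobianX γ u v E ρ p = _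
  rw [hW, smul_vecMul, adjointDirection_vecMul_fluxJacobianX hγ, ← hW4]
  simp [D, q2]

/-- Explicit solution of the adjoint outflow boundary condition
`W*ᵀ (n·F′(W)) = (1/ρ_∞)(ρ/ρ_∞ − 1)(1,0,0,0)` for the 2D Euler equations at a
supersonic outflow boundary parallel to the y-axis. -/
theorem adjoint_outflow_boundary_condition (γ u v E ρ ρinf p : ℝ)
    (hγ : γ ≠ 1) (hu : u ≠ 0) (hρ : ρ ≠ 0) (hρinf : ρinf ≠ 0)
    (hD : ((γ - 2) / 2) * (u ^ 2 + v ^ 2) + (γ / (γ - 1)) * u ^ 2 + v ^ 2 - γ * E ≠ 0) :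
    let q2 : ℝ := u ^ 2 + v ^ 2
    let D : ℝ := ((γ - 2) / 2) * q2 + (γ / (γ - 1)) * u ^ 2 + v ^ 2 - γ * E
    let M : Matrix (Fin 4) (Fin 4) ℝ :=
      !![0, 1, 0, 0;
         ((γ - 1) / 2) * q2 - u ^ 2, (3 - γ) * u, (1 - γ) * v, γ - 1;
         -(v * u), v, u, 0;
         ((γ - 1) * q2 - γ * E) * u, (p / ρ + E) - (γ - 1) * u ^ 2, (1 - γ) * v * u, γ * u]
    let W4 : ℝ := (1 / ρinf) * (ρ / ρinf - 1) / (D * u)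
    let W3 : ℝ := -v * W4
    let W2 : ℝ := -(γ / (γ - 1)) * u * W4
    let W1 : ℝ := ((γ + 1) / (γ - 1) * u ^ 2 + v ^ 2 - p / ρ - E) * W4
    Matrix.vecMul ![W1, W2, W3, W4] M = ![(1 / ρinf) * (ρ / ρinf - 1), 0, 0, 0] :=
  adjoint_outflow_boundary_condition_general γ u v E ρ ρinf p hγ hu hD
end

section
/- Fix γ ∈ ℝ, n = (n_x, n_y) ∈ ℝ², and W ∈ ℝ⁴ with W₁ ≠ 0; set u := W₂/W₁, v := W₃/W₁, E := W₄/W₁, q² := u²+v², and p/ρ := (γ−1)(E − q²/2). Assume the flow is tangent to the boundary: u n_x + v n_y = 0. Let A(W) be the Jacobian of the normal Euler flux F(W)·n as in Appendix B of the paper. Then for all vectors W*, δW ∈ ℝ⁴: W*ᵀ A(W) δW = (γ−1)(W*₂ n_x + W*₃ n_y) · ( (q²/2) δW₁ − u δW₂ − v δW₃ + δW₄ ) + (W*₁ + u W*₂ + v W*₃ + (p/ρ + E) W*₄) · (n_x δW₂ + n_y δW₃). In particular, the first factor of the first term is δp (the linearization of the pressure), and the boundary flux W*ᵀA(W)δW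 contains no term other than the δp term and the normal-momentum term δW·n = n_x δW₂ + n_y δW₃. -/
open Matrix

/-- On a slip wall (`u·n = 0`) the Euler boundary term `W*ᵀ A(W) δW` decomposes into
a pressure-variation term and a normal-momentum term:
`W*ᵀ A δW = (γ−1)(W*₂n_x + W*₃n_y) δp + (W*₁ + uW*₂ + vW*₃ + (p/ρ+E)W*₄)(n_xδW₂ + n_yδW₃)`. -/
theorem slip_wall_boundary_term_decomposition (γ nx ny : ℝ) (W : Fin 4 → ℝ)
    (hW : W 0 ≠ 0) (htan : (W 1 / W 0) * nx + (W 2 / W 0) * ny = 0) :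
    let u : ℝ := W 1 / W 0
    let v : ℝ := W 2 / W 0
    let E : ℝ := W 3 / W 0
    let q2 : ℝ := u ^ 2 + v ^ 2
    let un : ℝ := u * nx + v * ny
    let pρ : ℝ := (γ - 1) * (E - q2 / 2)
    let A : Matrix (Fin 4) (Fin 4) ℝ :=
      !![0, nx, ny, 0;
         (γ - 1) * q2 / 2 * nx - u * un, un - (γ - 2) * u * nx,
           u * ny - (γ - 1) * v * nx, (γ - 1) * nx;
         (γ - 1) * q2 / 2 * ny - v * un, v * nx - (γ - 1) * u * ny,
           un - (γ - 2) * v * ny, (γ - 1) * ny;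
         ((γ - 1) * q2 - γ * E) * un, (pρ + E) * nx - (γ - 1) * u * un,
           (pρ + E) * ny - (γ - 1) * v * un, γ * un]
    ∀ Wstar δW : Fin 4 → ℝ,
      Wstar ⬝ᵥ A.mulVec δW
        = (γ - 1) * (Wstar 1 * nx + Wstar 2 * ny)
            * ((q2 / 2) * δW 0 - u * δW 1 - v * δW 2 + δW 3)
          + (Wstar 0 + u * Wstar 1 + v * Wstar 2 + (pρ + E) * Wstar 3)
            * (nx * δW 1 + ny * δW 2) := by
  intro u v E q2 un pρ A Wstar δW
  have hun : un = 0 := htan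
  simp [A, dotProduct, Matrix.mulVec, Fin.sum_univ_four, hun]
  clear_value u v E q2 un pρ
  ring
end

section
/- Fix γ ∈ ℝ and W ∈ ℝ⁴ with W₁ ≠ 0 and W₃ = 0 (vanishing vertical momentum on the ground); set u := W₂/W₁, E := W₄/W₁. Let A(W) be the Jacobian of the normal Euler flux F(W)·n with n = (0,1). Then for all W* ∈ ℝ⁴ and all δW ∈ ℝ⁴ with δW₃ = 0: W*ᵀ A(W) δW = (γ−1)( (u²/2) δW₁ − u δW₂ + δW₄ ) · W*₃. In particular this equals δp · W*₃, where δp = (γ−1)((u²/2)δW₁ − uδW₂ + δW₄) is the linearization of the pressure p(W) = (γ−1)(W₄ − (W₂²+W₃²)/(2W₁)) at W in the direction δW (using W₃ = δW₃ = 0). -/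
open Matrix

/-- On the ground boundary (normal `n = (0,1)`, vanishing vertical momentum `W₃ = 0`),
tested against variations with `δW₃ = 0`, the Euler boundary term reduces to
`W*ᵀ A(W) δW = δp · W*₃`, with `δp = (γ−1)((u²/2)δW₁ − uδW₂ + δW₄)`. -/
theorem ground_boundary_term_is_pressure_variation (γ : ℝ) (W : Fin 4 → ℝ)
    (hW : W 0 ≠ 0) (hW3 : W 2 = 0) :
    let u : ℝ := W 1 / W 0
    let v : ℝ := W 2 / W 0
    let E : ℝ := W 3 / W 0
    let q2 : ℝ := u ^ 2 + v ^ 2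
    let nx : ℝ := 0
    let ny : ℝ := 1
    let un : ℝ := u * nx + v * ny
    let pρ : ℝ := (γ - 1) * (E - q2 / 2)
    let A : Matrix (Fin 4) (Fin 4) ℝ :=
      !![0, nx, ny, 0;
         (γ - 1) * q2 / 2 * nx - u * un, un - (γ - 2) * u * nx,
           u * ny - (γ - 1) * v * nx, (γ - 1) * nx;
         (γ - 1) * q2 / 2 * ny - v * un, v * nx - (γ - 1) * u * ny,
           un - (γ - 2) * v * ny, (γ - 1) * ny;
         ((γ - 1) * q2 - γ * E) * un, (pρ + E) * nx - (γ - 1) * u * un,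
           (pρ + E) * ny - (γ - 1) * v * un, γ * un]
    ∀ Wstar δW : Fin 4 → ℝ, δW 2 = 0 →
      Wstar ⬝ᵥ A.mulVec δW
        = (γ - 1) * ((u ^ 2 / 2) * δW 0 - u * δW 1 + δW 3) * Wstar 2 := by
  intro u v E q2 nx ny un pρ A Wstar δW hδ
  have hv : v = 0 := by simp [v, hW3]
  simp only [dotProduct, Matrix.mulVec, Fin.sum_univ_four, A,
    Matrix.cons_val', Matrix.cons_val_zero, Matrix.cons_val_one, Matrix.head_cons,
    Matrix.empty_val', Matrix.cons_val_fin_one, Matrix.head_fin_const,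
    Matrix.of_apply, Matrix.cons_val_succ, Matrix.cons_val_two, Matrix.cons_val_three, Matrix.tail_cons, hδ, hv, hW3]
  simp only [nx, ny, un, hv, hW3]
  simp only [pρ, E, q2, hv]
  ring
end
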